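/- arXiv:2206.08627 — 5 statements merged into one kernel-verified Lean document; each statement's English description precedes it below -/
import Mathlib

section
/- Let (α_t) satisfy α_0 = 1 and 1/α_{t+1}² − 1/α_{t+1} = 1/α_t² with α_{t+1} ∈ (0,1]. Then for all t ≥ 0, α_t² / α_{t+1}² ≤ 3. -/
/-- The RECAPP coefficients satisfy α_t²/α_{t+1}² ≤ 3. -/
theorem stmt5 (α : ℕ → ℝ) (h0 : α 0 = 1)
    (hmem : ∀ t, α (t + 1) ∈ Set.Ioc (0 : ℝ) 1)
    (hrec : ∀ t, 1 / (α (t + 1)) ^ 2 - 1 / (α (t + 1)) = 1 / (α t) ^ 2) :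
    ∀ t : ℕ, (α t) ^ 2 / (α (t + 1)) ^ 2 ≤ 3 := by
  have hpos : ∀ t, 0 < α t := by
    intro t
    cases t with
    | zero => rw [h0]; norm_num
    | succ n => exact (hmem n).1
  have key : ∀ t, (α t) ^ 2 * (1 - α (t + 1)) = (α (t + 1)) ^ 2 := by
    intro t
    have hx := (hmem t).1
    have ha := hpos t
    have h := hrec t
    field_simp at h
    nlinarith [h, sq_nonneg (α t), sq_nonneg (α (t + 1))]
  have hlt1 : ∀ t, α (t + 1) < 1 := by
    intro t
    have k := key t
    nlinarith [hpos t, (hmem t).1, sq_nonneg (α t)]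
  have hdec : ∀ t, α (t + 1) < α t := by
    intro t
    have k := key t
    have hx := (hmem t).1
    have ha := hpos t
    nlinarith [hlt1 t, mul_pos ha ha, mul_pos hx hx, sq_nonneg (α t + α (t + 1))]
  have h23 : ∀ t, α (t + 1) ≤ 2 / 3 := by
    intro t
    induction t with
    | zero =>
      have k := key 0
      rw [h0] at k
      by_contra h
      push_neg at h
      nlinarith [(hmem 0).1]
    | succ n ih =>
      have := hdec (n + 1)
      linarith
  intro t
  have hx := (hmem t).1
  have k := key t
  rw [div_le_iff₀ (by positivity)]
  nlinarith [h23 t, sq_nonneg (α t), k]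
end

section
/- Let J_+ be a geometric random variable with P[J_+ = k] = (1/2)^{k+1} for k = 0,1,2,…, let j_0 ≥ 0 be an integer, and let (x^{(j)})_{j≥0} be a sequence in ℝ^d converging to x*. Define p_J := (1/2)^{J_+ + 1} and the estimator X := x^{(j_0)} + p_J^{-1}(x^{(j_0 + J_+)} − x^{(max(j_0+J_+ −1, j_0))}). If the series ∑_j (x^{(j)}−x^{(j−1)}) converges absolutely, then E[X] = x* = lim_j x^{(j)}. -/
/-!
Since `p_J⁻¹` cancels the geometric weight `P[J₊ = k]`, the expectation splits into `x^{(j₀)}`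
(the weights sum to one) plus the series of increments `x^{(j₀+k)} - x^{(j₀+k-1)}`, `k ≥ 1`.
Absolute summability makes that series converge unconditionally, and it telescopes to
`x* - x^{(j₀)}`.
-/

open Filter Topology

theorem hasSum_sub_of_tendsto {G : Type*} [AddCommGroup G] [TopologicalSpace G]
    [IsTopologicalAddGroup G] [T2Space G] {f : ℕ → G} {a : G}
    (hs : Summable fun n => f (n + 1) - f n) (hf : Tendsto f atTop (𝓝 a)) :
    HasSum (fun n => f (n + 1) - f n) (a - f 0) := by
  rw [hs.hasSum_iff_tendsto_nat]
  simp only [Finset.sum_range_sub]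
  exact hf.sub_const (f 0)

/-- The `k = 0` increment vanishes because of the `max`, which also absorbs the truncated
subtraction `j₀ + 0 - 1`. -/
theorem hasSum_sub_max_pred_of_tendsto {E : Type*} [NormedAddCommGroup E] [CompleteSpace E]
    {x : ℕ → E} {xstar : E} (j0 : ℕ) (hlim : Tendsto x atTop (𝓝 xstar))
    (habs : Summable fun j => ‖x (j + 1) - x j‖) :
    HasSum (fun k => x (j0 + k) - x (max (j0 + k - 1) j0)) (xstar - x j0) := by
  have hsucc : ∀ k, x (j0 + (k + 1)) - x (max (j0 + (k + 1) - 1) j0)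
      = x (j0 + (k + 1)) - x (j0 + k) := fun k => by
    rw [show max (j0 + (k + 1) - 1) j0 = j0 + k by omega]
  have hshift : HasSum (fun k => x (j0 + (k + 1)) - x (j0 + k)) (xstar - x (j0 + 0)) := by
    refine hasSum_sub_of_tendsto (f := fun k => x (j0 + k)) (Summable.of_norm ?_) ?_
    · exact ((summable_nat_add_iff j0).mpr habs).congr fun n => by
        simp only [add_comm n j0, add_assoc]
    · exact hlim.comp (tendsto_atTop_mono (Nat.le_add_left · j0) tendsto_id)
  rw [← hasSum_nat_add_iff' 1]
  simpa [hsucc] using hshift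

theorem hasSum_half_pow_succ : HasSum (fun k : ℕ => (1 / 2 : ℝ) ^ (k + 1)) 1 := by
  simpa [pow_succ, mul_comm] using hasSum_geometric_two.mul_left (1 / 2 : ℝ)

/-- Unbiasedness of the MLMC estimator: with geometric weights P[J₊ = k] = (1/2)^{k+1},
the expectation of the estimator X = x^{(j₀)} + p_J⁻¹ (x^{(j₀+J₊)} − x^{(max(j₀+J₊−1, j₀))})
equals the limit x*. -/
theorem stmt7 {d : ℕ} (x : ℕ → EuclideanSpace ℝ (Fin d)) (xstar : EuclideanSpace ℝ (Fin d))
    (j0 : ℕ)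
    (hlim : Filter.Tendsto x Filter.atTop (nhds xstar))
    (habs : Summable fun j : ℕ => ‖x (j + 1) - x j‖) :
    (∑' k : ℕ, ((1 / 2 : ℝ) ^ (k + 1)) •
        (x j0 + ((2 : ℝ) ^ (k + 1)) • (x (j0 + k) - x (max (j0 + k - 1) j0)))) = xstar := by
  have hweight : ∀ k : ℕ, ((1 / 2 : ℝ) ^ (k + 1)) * (2 : ℝ) ^ (k + 1) = 1 := fun k => by
    rw [← mul_pow]; norm_num
  have hsplit := (hasSum_half_pow_succ.smul_const (x j0)).add
    (hasSum_sub_max_pred_of_tendsto j0 hlim habs)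
  simp only [smul_add, smul_smul, hweight, one_smul] at hsplit ⊢
  rw [hsplit.tsum_eq, add_sub_cancel]
end

section
/- Let (x^{(j)})_{j≥0} be points in ℝ^d with ‖x^{(j)} − x*‖² ≤ 2·(1/8)^{j+1}·(E_0/λ) for all j ≥ 0, where E_0, λ > 0. For J_+ geometric with P[J_+ = k] = 2^{-(k+1)}, J = j_0 + J_+ with integer j_0 ≥ 2, the MLMC estimator X = x^{(j_0)} + 2^{J_+ + 1}(x^{(J)} − x^{(max(J−1, j_0))}) satisfies E‖X − x*‖² ≤ 6.5·E_0/(λ·8^{j_0}), and in particular E‖X − x*‖² ≤ E_0/(4λ) when j_0 ≥ 2. -/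
/-!
The summand for `J₊ = 0` is `‖x^{(j₀)} − x*‖² / 2`. For `J₊ = m + 1` the correction is
`2^{m+2} (x^{(j₀+m+1)} − x^{(j₀+m)})`, and `‖a + b‖² ≤ 2‖a‖² + 2‖b‖²` together with the decay
hypothesis bounds consecutive differences by `‖x^{(j+1)} − x^{(j)}‖² ≤ 4.5 · 8^{-(j+1)} · E₀/λ`.
The weight `2^{-(m+2)}` against the squared factor `4^{m+2}` leaves `8^{-j₀}` times a geometric
series in `1/2` and `1/4`, and the total is `(1/8 + 1/4 + 6) · 8^{-j₀} · E₀/λ`.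
-/

lemma norm_add_sq_le_two_mul {E : Type*} [SeminormedAddGroup E] (a b : E) :
    ‖a + b‖ ^ 2 ≤ 2 * (‖a‖ ^ 2 + ‖b‖ ^ 2) :=
  (pow_le_pow_left₀ (norm_nonneg _) (norm_add_le a b) 2).trans add_sq_le

lemma norm_sub_sq_le_two_mul {E : Type*} [SeminormedAddGroup E] (a b : E) :
    ‖a - b‖ ^ 2 ≤ 2 * (‖a‖ ^ 2 + ‖b‖ ^ 2) :=
  (pow_le_pow_left₀ (norm_nonneg _) (norm_sub_le a b) 2).trans add_sq_le

section MLMC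

variable {E : Type*} [SeminormedAddCommGroup E] {x : ℕ → E} {xstar : E} {C : ℝ}

def SqDistDecay (x : ℕ → E) (xstar : E) (C : ℝ) : Prop :=
  ∀ j, ‖x j - xstar‖ ^ 2 ≤ 2 * (1 / 8 : ℝ) ^ (j + 1) * C

lemma SqDistDecay.norm_succ_sub_sq_le (hdecay : SqDistDecay x xstar C) (j : ℕ) :
    ‖x (j + 1) - x j‖ ^ 2 ≤ 9 / 2 * (1 / 8 : ℝ) ^ (j + 1) * C :=
  calc ‖x (j + 1) - x j‖ ^ 2
      = ‖(x (j + 1) - xstar) - (x j - xstar)‖ ^ 2 := by rw [sub_sub_sub_cancel_right]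
    _ ≤ 2 * (‖x (j + 1) - xstar‖ ^ 2 + ‖x j - xstar‖ ^ 2) := norm_sub_sq_le_two_mul _ _
    _ ≤ 2 * (2 * (1 / 8 : ℝ) ^ (j + 1 + 1) * C + 2 * (1 / 8 : ℝ) ^ (j + 1) * C) := by
        gcongr <;> apply hdecay
    _ = 9 / 2 * (1 / 8 : ℝ) ^ (j + 1) * C := by ring

lemma SqDistDecay.nonneg (hdecay : SqDistDecay x xstar C) : 0 ≤ C := by
  have h := (sq_nonneg ‖x 0 - xstar‖).trans (hdecay 0)
  norm_num at h
  linarith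

variable [NormedSpace ℝ E]

/-- `P[J₊ = k] · ‖X − x*‖²` on the event `J₊ = k`, where `J = j₀ + k`. -/
noncomputable def mlmcTerm (x : ℕ → E) (xstar : E) (j0 k : ℕ) : ℝ :=
  (1 / 2 : ℝ) ^ (k + 1) *
    ‖x j0 + ((2 : ℝ) ^ (k + 1)) • (x (j0 + k) - x (max (j0 + k - 1) j0)) - xstar‖ ^ 2

lemma mlmcTerm_nonneg (j0 k : ℕ) : 0 ≤ mlmcTerm x xstar j0 k := by
  unfold mlmcTerm; positivity

lemma mlmcTerm_zero (j0 : ℕ) : mlmcTerm x xstar j0 0 = 1 / 2 * ‖x j0 - xstar‖ ^ 2 := by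
  simp [mlmcTerm]

lemma mlmcTerm_succ (j0 m : ℕ) :
    mlmcTerm x xstar j0 (m + 1) = (1 / 2 : ℝ) ^ (m + 2) *
      ‖(x j0 - xstar) + ((2 : ℝ) ^ (m + 2)) • (x (j0 + m + 1) - x (j0 + m))‖ ^ 2 := by
  have hmax : max (j0 + (m + 1) - 1) j0 = j0 + m := by omega
  rw [mlmcTerm, hmax, add_sub_right_comm, ← add_assoc]

lemma mlmcTerm_zero_le (hdecay : SqDistDecay x xstar C) (j0 : ℕ) :
    mlmcTerm x xstar j0 0 ≤ (1 / 8 : ℝ) ^ j0 * C / 8 := by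
  have h := hdecay j0
  rw [pow_succ (1 / 8 : ℝ) j0] at h
  rw [mlmcTerm_zero]
  linarith

lemma mlmcTerm_succ_le (hdecay : SqDistDecay x xstar C) (j0 m : ℕ) :
    mlmcTerm x xstar j0 (m + 1) ≤
      (1 / 8 : ℝ) ^ j0 * C / 8 * (1 / 2) ^ m + 9 / 2 * ((1 / 8 : ℝ) ^ j0 * C) * (1 / 4) ^ m := by
  set c : ℝ := 2 ^ (m + 2)
  have hweight : (1 / 2 : ℝ) ^ (m + 1) * c ^ 2 * (1 / 8) ^ (m + 1) = (1 / 4) ^ m := by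
    rw [show (1 / 4 : ℝ) = 1 / 2 * 2 * 2 * (1 / 8) by norm_num, mul_pow, mul_pow, mul_pow]
    ring
  calc mlmcTerm x xstar j0 (m + 1)
      = (1 / 2 : ℝ) ^ (m + 2) * ‖(x j0 - xstar) + c • (x (j0 + m + 1) - x (j0 + m))‖ ^ 2 :=
        mlmcTerm_succ j0 m
    _ ≤ (1 / 2 : ℝ) ^ (m + 2) *
          (2 * (‖x j0 - xstar‖ ^ 2 + c ^ 2 * ‖x (j0 + m + 1) - x (j0 + m)‖ ^ 2)) := by
        gcongr
        refine (norm_add_sq_le_two_mul _ _).trans_eq ?_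
        rw [norm_smul, mul_pow, Real.norm_eq_abs, sq_abs]
    _ = (1 / 2 : ℝ) ^ (m + 1) * ‖x j0 - xstar‖ ^ 2 +
          (1 / 2 : ℝ) ^ (m + 1) * c ^ 2 * ‖x (j0 + m + 1) - x (j0 + m)‖ ^ 2 := by ring
    _ ≤ (1 / 2 : ℝ) ^ (m + 1) * (2 * (1 / 8 : ℝ) ^ (j0 + 1) * C) +
          (1 / 2 : ℝ) ^ (m + 1) * c ^ 2 * (9 / 2 * (1 / 8 : ℝ) ^ (j0 + m + 1) * C) := by
        gcongr
        · exact hdecay j0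
        · exact hdecay.norm_succ_sub_sq_le (j0 + m)
    _ = (1 / 8 : ℝ) ^ j0 * C / 8 * (1 / 2) ^ m +
          9 / 2 * ((1 / 8 : ℝ) ^ j0 * C) * ((1 / 2 : ℝ) ^ (m + 1) * c ^ 2 * (1 / 8) ^ (m + 1)) := by
        ring
    _ = _ := by rw [hweight]

lemma tsum_mlmcTerm_le (hdecay : SqDistDecay x xstar C) (j0 : ℕ) :
    ∑' k, mlmcTerm x xstar j0 k ≤ 51 / 8 * ((1 / 8 : ℝ) ^ j0 * C) := by
  set B := (1 / 8 : ℝ) ^ j0 * C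
  set g : ℕ → ℝ := fun m ↦ B / 8 * (1 / 2) ^ m + 9 / 2 * B * (1 / 4) ^ m
  have hg : HasSum g (B / 8 * (1 - 1 / 2)⁻¹ + 9 / 2 * B * (1 - 1 / 4)⁻¹) :=
    ((hasSum_geometric_of_lt_one (by norm_num) (by norm_num)).mul_left _).add
      ((hasSum_geometric_of_lt_one (by norm_num) (by norm_num)).mul_left _)
  have hsucc : Summable fun m ↦ mlmcTerm x xstar j0 (m + 1) :=
    hg.summable.of_nonneg_of_le (fun _ ↦ mlmcTerm_nonneg _ _) (mlmcTerm_succ_le hdecay j0)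
  rw [((summable_nat_add_iff 1).1 hsucc).tsum_eq_zero_add]
  have htail := hsucc.tsum_le_tsum (mlmcTerm_succ_le hdecay j0) hg.summable
  rw [hg.tsum_eq] at htail
  linarith [mlmcTerm_zero_le hdecay j0]

end MLMC

theorem stmt8_general {d : ℕ} (x : ℕ → EuclideanSpace ℝ (Fin d)) (xstar : EuclideanSpace ℝ (Fin d))
    (E0 lam : ℝ) (j0 : ℕ) (hj0 : 2 ≤ j0)
    (hdecay : ∀ j : ℕ, ‖x j - xstar‖ ^ 2 ≤ 2 * (1 / 8 : ℝ) ^ (j + 1) * (E0 / lam)) :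
    (∑' k : ℕ, ((1 / 2 : ℝ) ^ (k + 1)) *
        ‖x j0 + ((2 : ℝ) ^ (k + 1)) • (x (j0 + k) - x (max (j0 + k - 1) j0)) - xstar‖ ^ 2)
      ≤ 6.5 * E0 / (lam * 8 ^ j0)
    ∧ (∑' k : ℕ, ((1 / 2 : ℝ) ^ (k + 1)) *
        ‖x j0 + ((2 : ℝ) ^ (k + 1)) • (x (j0 + k) - x (max (j0 + k - 1) j0)) - xstar‖ ^ 2)
      ≤ E0 / (4 * lam) := by
  change ∑' k, mlmcTerm x xstar j0 k ≤ _ ∧ ∑' k, mlmcTerm x xstar j0 k ≤ _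
  have hsum : ∑' k, mlmcTerm x xstar j0 k ≤ 51 / 8 * ((1 / 8 : ℝ) ^ j0 * (E0 / lam)) :=
    tsum_mlmcTerm_le hdecay j0
  have hC : 0 ≤ E0 / lam := SqDistDecay.nonneg hdecay
  have hpow : (1 / 8 : ℝ) ^ j0 ≤ (1 / 8) ^ 2 := pow_le_pow_of_le_one (by norm_num) (by norm_num) hj0
  have hbound : 6.5 * E0 / (lam * 8 ^ j0) = 13 / 2 * ((1 / 8 : ℝ) ^ j0 * (E0 / lam)) := by
    rw [mul_div_assoc, div_mul_eq_div_div, one_div_pow, one_div_mul_eq_div]; norm_num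
  have hquarter : E0 / (4 * lam) = E0 / lam / 4 := by rw [mul_comm, div_mul_eq_div_div]
  refine ⟨?_, ?_⟩
  · rw [hbound]; linarith [mul_nonneg (pow_nonneg (by norm_num : (0 : ℝ) ≤ 1 / 8) j0) hC]
  · rw [hquarter]; linarith [mul_le_mul_of_nonneg_right hpow hC]

/-- Variance bound of the MLMC estimator: geometric decay of squared distances implies
E‖X − x*‖² ≤ 6.5·E₀/(λ·8^{j₀}), and ≤ E₀/(4λ) when j₀ ≥ 2. -/
theorem stmt8 {d : ℕ} (x : ℕ → EuclideanSpace ℝ (Fin d)) (xstar : EuclideanSpace ℝ (Fin d))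
    (E0 lam : ℝ) (hE0 : 0 < E0) (hlam : 0 < lam) (j0 : ℕ) (hj0 : 2 ≤ j0)
    (hdecay : ∀ j : ℕ, ‖x j - xstar‖ ^ 2 ≤ 2 * (1 / 8 : ℝ) ^ (j + 1) * (E0 / lam)) :
    (∑' k : ℕ, ((1 / 2 : ℝ) ^ (k + 1)) *
        ‖x j0 + ((2 : ℝ) ^ (k + 1)) • (x (j0 + k) - x (max (j0 + k - 1) j0)) - xstar‖ ^ 2)
      ≤ 6.5 * E0 / (lam * 8 ^ j0)
    ∧ (∑' k : ℕ, ((1 / 2 : ℝ) ^ (k + 1)) *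
        ‖x j0 + ((2 : ℝ) ^ (k + 1)) • (x (j0 + k) - x (max (j0 + k - 1) j0)) - xstar‖ ^ 2)
      ≤ E0 / (4 * lam) :=
  stmt8_general x xstar E0 lam j0 hj0 hdecay
end

section
/- In the SVRG setting (F = (1/n)∑ f_i with each f_i convex and L-smooth, F_s^λ(x) = F(x) + (λ/2)‖x−s‖², x* = argmin_{x∈X} F_s^λ), the gradient estimator g(x) = ∇f_i(x) − ∇f_i(x_full) + ∇F(x_full) + λ(x−s) with uniform random i satisfies: E‖g(x) − ∇F_s^λ(x)‖² ≤ E‖∇f_i(x_full) − ∇f_i(x)‖² ≤ 4L·( V^F_{x*}(x_full) + V^{F_s^λ}_{x*}(x) ), where V^F_a(b) = F(b) − F(a) − ⟨∇F(a), b−a⟩. -/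
/-!
The first inequality is `E‖Z - E Z‖² ≤ E‖Z‖²` for `Z = ∇fᵢ(x) - ∇fᵢ(x_full)`, whose mean is
`∇F(x) - ∇F(x_full)`. For the second, a convex function with `L`-Lipschitz gradient is
cocoercive, `‖∇f(a) - ∇f(b)‖² ≤ 2L V^f_b(a)`: compare the first-order convexity inequality at `b`
with the descent lemma at `a` along the step `a - L⁻¹ (∇f(a) - ∇f(b))`. Splitting
`∇fᵢ(x_full) - ∇fᵢ(x)` through `x*` and averaging over `i` gives the bound
`4L (V^F_{x*}(x_full) + V^F_{x*}(x))`, and `V^{F_s^λ}_{x*}(x) = V^F_{x*}(x) + λ/2 ‖x - x*‖²`.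
-/

open scoped BigOperators RealInnerProductSpace

section
variable {E : Type*} [NormedAddCommGroup E] [InnerProductSpace ℝ E]

/-- `bregmanDiv f g a b` is the paper's `V^f_a(b)`, where `g` plays the role of `∇f`. -/
def bregmanDiv (f : E → ℝ) (g : E → E) (a b : E) : ℝ := f b - f a - ⟪g a, b - a⟫

theorem Finset.sum_norm_sub_average_sq_le {ι : Type*} (s : Finset ι) (Z : ι → E) :
    ∑ i ∈ s, ‖Z i - (s.card : ℝ)⁻¹ • ∑ j ∈ s, Z j‖ ^ 2 ≤ ∑ i ∈ s, ‖Z i‖ ^ 2 := by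
  set m := (s.card : ℝ)⁻¹ • ∑ j ∈ s, Z j
  have hsum : ∑ j ∈ s, Z j = (s.card : ℝ) • m := by
    rcases s.eq_empty_or_nonempty with rfl | hs
    · simp
    · rw [smul_smul, mul_inv_cancel₀ (by exact_mod_cast hs.card_pos.ne'), one_smul]
  have hexpand : ∑ i ∈ s, ‖Z i - m‖ ^ 2 = ∑ i ∈ s, ‖Z i‖ ^ 2 - s.card * ‖m‖ ^ 2 := by
    simp only [norm_sub_sq_real, Finset.sum_add_distrib, Finset.sum_sub_distrib, ← Finset.mul_sum,
      ← sum_inner, hsum, real_inner_smul_left, real_inner_self_eq_norm_sq, Finset.sum_const,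
      nsmul_eq_mul]
    ring
  rw [hexpand]
  exact sub_le_self _ (mul_nonneg s.card.cast_nonneg (sq_nonneg _))

theorem bregmanDiv_const_mul_sum {ι : Type*} (s : Finset ι) (c : ℝ) (f : ι → E → ℝ)
    (g : ι → E → E) (a b : E) :
    bregmanDiv (fun z => c * ∑ i ∈ s, f i z) (fun z => c • ∑ i ∈ s, g i z) a b
      = c * ∑ i ∈ s, bregmanDiv (f i) (g i) a b := by
  simp only [bregmanDiv, Finset.sum_sub_distrib, real_inner_smul_left, sum_inner]
  ring

theorem bregmanDiv_add_half_mul_norm_sub_sq (F : E → ℝ) (gF : E → E) (lam : ℝ) (s a b : E) :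
    bregmanDiv (fun z => F z + lam / 2 * ‖z - s‖ ^ 2) (fun z => gF z + lam • (z - s)) a b
      = bregmanDiv F gF a b + lam / 2 * ‖b - a‖ ^ 2 := by
  have hexpand := norm_add_sq_real (b - a) (a - s)
  rw [sub_add_sub_cancel] at hexpand
  simp only [bregmanDiv, inner_add_left, real_inner_smul_left, hexpand,
    real_inner_comm (b - a) (a - s)]
  ring

variable [CompleteSpace E] {f : E → ℝ}

theorem HasGradientAt.hasDerivAt_add_smul {g w u : E} {t : ℝ}
    (hf : HasGradientAt f g (w + t • u)) :
    HasDerivAt (fun t : ℝ => f (w + t • u)) ⟪g, u⟫ t := by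
  have hline : HasDerivAt (fun t : ℝ => w + t • u) u t := by
    simpa using ((hasDerivAt_id t).smul_const u).const_add w
  simpa [Function.comp_def] using hf.hasFDerivAt.comp_hasDerivAt t hline

theorem ConvexOn.add_inner_le_of_hasGradientAt (hconv : ConvexOn ℝ Set.univ f) {g w : E}
    (hf : HasGradientAt f g w) (z : E) : f w + ⟪g, z - w⟫ ≤ f z := by
  have hline : ConvexOn ℝ Set.univ (fun t : ℝ => f (w + t • (z - w))) := by
    simpa [Function.comp_def, AffineMap.lineMap_apply, add_comm]
      using hconv.comp_affineMap (AffineMap.lineMap w z : ℝ →ᵃ[ℝ] E)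
  have hderiv : HasDerivAt (fun t : ℝ => f (w + t • (z - w))) ⟪g, z - w⟫ 0 :=
    HasGradientAt.hasDerivAt_add_smul (by rwa [zero_smul, add_zero])
  have := hline.le_slope_of_hasDerivAt (Set.mem_univ 0) (Set.mem_univ 1) one_pos hderiv
  simp only [slope_def_field, one_smul, add_sub_cancel, zero_smul, add_zero, sub_zero,
    div_one] at this
  linarith

theorem le_add_inner_add_sq_of_lipschitz_gradient {g : E → E} {L : ℝ}
    (hf : ∀ z, HasGradientAt f (g z) z) (hg : ∀ z w, ‖g z - g w‖ ≤ L * ‖z - w‖) (w z : E) :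
    f z ≤ f w + ⟪g w, z - w⟫ + L / 2 * ‖z - w‖ ^ 2 := by
  set u := z - w
  let φ : ℝ → ℝ := fun t => f (w + t • u) - t * ⟪g w, u⟫ - L / 2 * t ^ 2 * ‖u‖ ^ 2
  have hφ : ∀ t, HasDerivAt φ (⟪g (w + t • u), u⟫ - ⟪g w, u⟫ - L * t * ‖u‖ ^ 2) t := by
    intro t
    refine ((((hf (w + t • u)).hasDerivAt_add_smul.sub
      ((hasDerivAt_id t).mul_const ⟪g w, u⟫)).sub
      (((hasDerivAt_pow 2 t).const_mul (L / 2)).mul_const (‖u‖ ^ 2)))).congr_deriv ?_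
    simp only [Nat.cast_ofNat]; ring
  have hφ_nonpos : ∀ t ∈ interior (Set.Ici (0 : ℝ)),
      ⟪g (w + t • u), u⟫ - ⟪g w, u⟫ - L * t * ‖u‖ ^ 2 ≤ 0 := by
    intro t ht
    rw [interior_Ici, Set.mem_Ioi] at ht
    have hdiff : ⟪g (w + t • u) - g w, u⟫ ≤ L * t * ‖u‖ ^ 2 :=
      calc ⟪g (w + t • u) - g w, u⟫ ≤ ‖g (w + t • u) - g w‖ * ‖u‖ := real_inner_le_norm _ _
        _ ≤ L * ‖t • u‖ * ‖u‖ := by gcongr; simpa using hg (w + t • u) w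
        _ = L * t * ‖u‖ ^ 2 := by rw [norm_smul, Real.norm_of_nonneg ht.le]; ring
    rw [inner_sub_left] at hdiff
    linarith
  have hanti := antitoneOn_of_hasDerivWithinAt_nonpos (convex_Ici 0)
    (fun t _ => (hφ t).continuousAt.continuousWithinAt) (fun t _ => (hφ t).hasDerivWithinAt)
    hφ_nonpos
  have := hanti Set.self_mem_Ici (Set.mem_Ici.2 zero_le_one) zero_le_one
  simp only [φ, u, one_smul, add_sub_cancel, zero_smul, add_zero, one_pow, mul_one, one_mul,
    zero_mul, sub_zero, ne_eq, OfNat.ofNat_ne_zero, not_false_eq_true, zero_pow, mul_zero] at this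
  linarith

theorem norm_sub_sq_le_two_mul_bregmanDiv {g : E → E} {L : ℝ} (hL : 0 < L)
    (hconv : ConvexOn ℝ Set.univ f) (hf : ∀ z, HasGradientAt f (g z) z)
    (hg : ∀ z w, ‖g z - g w‖ ≤ L * ‖z - w‖) (a b : E) :
    ‖g a - g b‖ ^ 2 ≤ 2 * L * bregmanDiv f g b a := by
  set v := g a - g b
  set z := a - L⁻¹ • v
  have hconv_b := hconv.add_inner_le_of_hasGradientAt (hf b) z
  have hdescent_a := le_add_inner_add_sq_of_lipschitz_gradient hf hg a z
  have hza : z - a = -L⁻¹ • v := by module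
  have hzb : z - b = (a - b) - L⁻¹ • v := by module
  rw [hzb, inner_sub_right, real_inner_smul_right] at hconv_b
  rw [hza, real_inner_smul_right, norm_smul, mul_pow, Real.norm_eq_abs, sq_abs] at hdescent_a
  have hv : L⁻¹ * ⟪g a, v⟫ - L⁻¹ * ⟪g b, v⟫ = L⁻¹ * ‖v‖ ^ 2 := by
    rw [← mul_sub, ← inner_sub_left, real_inner_self_eq_norm_sq]
  have key : L⁻¹ * ‖v‖ ^ 2 / 2 ≤ bregmanDiv f g b a := by
    unfold bregmanDiv
    have : L / 2 * ((-L⁻¹) ^ 2 * ‖v‖ ^ 2) = L⁻¹ * ‖v‖ ^ 2 / 2 := by field_simp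
    linarith
  calc ‖v‖ ^ 2 = 2 * L * (L⁻¹ * ‖v‖ ^ 2 / 2) := by field_simp
    _ ≤ 2 * L * bregmanDiv f g b a := by gcongr

theorem norm_sub_sq_le_four_mul_bregmanDiv_add {g : E → E} {L : ℝ} (hL : 0 < L)
    (hconv : ConvexOn ℝ Set.univ f) (hf : ∀ z, HasGradientAt f (g z) z)
    (hg : ∀ z w, ‖g z - g w‖ ≤ L * ‖z - w‖) (c x y : E) :
    ‖g y - g x‖ ^ 2 ≤ 4 * L * (bregmanDiv f g c y + bregmanDiv f g c x) := by
  calc ‖g y - g x‖ ^ 2 = ‖(g y - g c) - (g x - g c)‖ ^ 2 := by rw [sub_sub_sub_cancel_right]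
    _ ≤ 2 * (‖g y - g c‖ ^ 2 + ‖g x - g c‖ ^ 2) := by
      rw [← parallelogram_law_with_norm ℝ]
      exact le_add_of_nonneg_left (sq_nonneg _)
    _ ≤ 2 * (2 * L * bregmanDiv f g c y + 2 * L * bregmanDiv f g c x) := by
      gcongr <;> exact norm_sub_sq_le_two_mul_bregmanDiv hL hconv hf hg _ _
    _ = 4 * L * (bregmanDiv f g c y + bregmanDiv f g c x) := by ring

end

theorem stmt10_general {d n : ℕ}
    (f : Fin n → EuclideanSpace ℝ (Fin d) → ℝ)
    (gf : Fin n → EuclideanSpace ℝ (Fin d) → EuclideanSpace ℝ (Fin d))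
    (L : ℝ) (hL : 0 < L)
    (hgrad : ∀ i z, HasGradientAt (f i) (gf i z) z)
    (hconv : ∀ i, ConvexOn ℝ Set.univ (f i))
    (hlip : ∀ i z w, ‖gf i z - gf i w‖ ≤ L * ‖z - w‖)
    (lam : ℝ) (hlam : 0 ≤ lam) (s : EuclideanSpace ℝ (Fin d))
    (F : EuclideanSpace ℝ (Fin d) → ℝ) (hF : ∀ z, F z = (n : ℝ)⁻¹ * ∑ i, f i z)
    (gF : EuclideanSpace ℝ (Fin d) → EuclideanSpace ℝ (Fin d))
    (hgF : ∀ z, gF z = (n : ℝ)⁻¹ • ∑ i, gf i z)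
    (xstar : EuclideanSpace ℝ (Fin d))
    (x xfull : EuclideanSpace ℝ (Fin d)) :
    (n : ℝ)⁻¹ * ∑ i, ‖(gf i x - gf i xfull + gF xfull + lam • (x - s))
        - (gF x + lam • (x - s))‖ ^ 2
      ≤ (n : ℝ)⁻¹ * ∑ i, ‖gf i xfull - gf i x‖ ^ 2
    ∧ (n : ℝ)⁻¹ * ∑ i, ‖gf i xfull - gf i x‖ ^ 2
      ≤ 4 * L * ((F xfull - F xstar - ⟪gF xstar, xfull - xstar⟫)
          + ((F x + lam / 2 * ‖x - s‖ ^ 2) - (F xstar + lam / 2 * ‖xstar - s‖ ^ 2)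
              - ⟪gF xstar + lam • (xstar - s), x - xstar⟫)) := by
  constructor
  · have hcentered : ∀ i,
        (gf i x - gf i xfull + gF xfull + lam • (x - s)) - (gF x + lam • (x - s))
          = (gf i x - gf i xfull)
            - ((Finset.univ : Finset (Fin n)).card : ℝ)⁻¹ • ∑ j, (gf j x - gf j xfull) := by
      intro i
      rw [Finset.card_univ, Fintype.card_fin, Finset.sum_sub_distrib, smul_sub (n : ℝ)⁻¹,
        ← hgF, ← hgF]
      abel
    simp_rw [hcentered, norm_sub_rev (gf _ xfull)]
    exact mul_le_mul_of_nonneg_left (Finset.univ.sum_norm_sub_average_sq_le _) (by positivity)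
  · calc (n : ℝ)⁻¹ * ∑ i, ‖gf i xfull - gf i x‖ ^ 2
        ≤ (n : ℝ)⁻¹ * ∑ i, 4 * L * (bregmanDiv (f i) (gf i) xstar xfull
            + bregmanDiv (f i) (gf i) xstar x) := by
          gcongr with i
          exact norm_sub_sq_le_four_mul_bregmanDiv_add hL (hconv i) (hgrad i) (hlip i) _ _ _
      _ = 4 * L * (bregmanDiv F gF xstar xfull + bregmanDiv F gF xstar x) := by
          rw [funext hF, funext hgF, bregmanDiv_const_mul_sum, bregmanDiv_const_mul_sum,
            ← Finset.mul_sum, Finset.sum_add_distrib]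
          ring
      _ ≤ 4 * L * (bregmanDiv F gF xstar xfull + bregmanDiv (fun z => F z + lam / 2 * ‖z - s‖ ^ 2)
            (fun z => gF z + lam • (z - s)) xstar x) := by
          rw [bregmanDiv_add_half_mul_norm_sub_sq]
          gcongr
          exact le_add_of_nonneg_right (by positivity)

/-- Variance bound for the SVRG gradient estimator:
E‖g(x) − ∇F_s^λ(x)‖² ≤ E‖∇f_i(x_full) − ∇f_i(x)‖² ≤ 4L(V^F_{x*}(x_full) + V^{F_s^λ}_{x*}(x)). -/
theorem stmt10 {d n : ℕ} (hn : 0 < n)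
    (f : Fin n → EuclideanSpace ℝ (Fin d) → ℝ)
    (gf : Fin n → EuclideanSpace ℝ (Fin d) → EuclideanSpace ℝ (Fin d))
    (L : ℝ) (hL : 0 < L)
    (hgrad : ∀ i z, HasGradientAt (f i) (gf i z) z)
    (hconv : ∀ i, ConvexOn ℝ Set.univ (f i))
    (hlip : ∀ i z w, ‖gf i z - gf i w‖ ≤ L * ‖z - w‖)
    (lam : ℝ) (hlam : 0 ≤ lam) (s : EuclideanSpace ℝ (Fin d))
    (X : Set (EuclideanSpace ℝ (Fin d))) (hXcl : IsClosed X) (hXc : Convex ℝ X)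
    (F : EuclideanSpace ℝ (Fin d) → ℝ) (hF : ∀ z, F z = (n : ℝ)⁻¹ * ∑ i, f i z)
    (gF : EuclideanSpace ℝ (Fin d) → EuclideanSpace ℝ (Fin d))
    (hgF : ∀ z, gF z = (n : ℝ)⁻¹ • ∑ i, gf i z)
    (xstar : EuclideanSpace ℝ (Fin d)) (hxstar : xstar ∈ X)
    (hmin : ∀ z ∈ X, F xstar + lam / 2 * ‖xstar - s‖ ^ 2 ≤ F z + lam / 2 * ‖z - s‖ ^ 2)
    (hvi : ∀ z ∈ X, 0 ≤ ⟪gF xstar + lam • (xstar - s), z - xstar⟫)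
    (x xfull : EuclideanSpace ℝ (Fin d)) (hx : x ∈ X) (hxf : xfull ∈ X) :
    (n : ℝ)⁻¹ * ∑ i, ‖(gf i x - gf i xfull + gF xfull + lam • (x - s))
        - (gF x + lam • (x - s))‖ ^ 2
      ≤ (n : ℝ)⁻¹ * ∑ i, ‖gf i xfull - gf i x‖ ^ 2
    ∧ (n : ℝ)⁻¹ * ∑ i, ‖gf i xfull - gf i x‖ ^ 2
      ≤ 4 * L * ((F xfull - F xstar - ⟪gF xstar, xfull - xstar⟫)
          + ((F x + lam / 2 * ‖x - s‖ ^ 2) - (F xstar + lam / 2 * ‖xstar - s‖ ^ 2)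
              - ⟪gF xstar + lam • (xstar - s), x - xstar⟫)) :=
  stmt10_general f gf L hL hgrad hconv hlip lam hlam s F hF gF hgF xstar x xfull
end

section
/- Let f(x,y) be convex in x and μ-strongly-concave in y on X × Y, differentiable, with F(x) := max_{y∈Y} f(x,y) achieved at y_br(x), and let (x*, y*) be a point with y* = y_br(x*). Then for any x_prev ∈ X: μ·(1/2)‖y_br(x_prev) − y*‖² ≤ f(x_prev, y_br(x_prev)) − f(x_prev, y*) ≤ F(x_prev) − F(x*) − ⟨∇F(x*), x_prev − x*⟩ = V^F_{x*}(x_prev). -/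
open scoped RealInnerProductSpace

/-- Best-response distance bound: μ(1/2)‖y_br(x_prev) − y*‖² ≤ f(x_prev, y_br(x_prev)) −
f(x_prev, y*) ≤ V^F_{x*}(x_prev) where ∇F(x*) = ∇_x f(x*, y*) by Danskin. -/
theorem stmt15 {d m : ℕ}
    (X : Set (EuclideanSpace ℝ (Fin d))) (Y : Set (EuclideanSpace ℝ (Fin m)))
    (hXc : Convex ℝ X) (hYc : Convex ℝ Y) (hXcl : IsClosed X) (hYcl : IsClosed Y)
    (f : EuclideanSpace ℝ (Fin d) → EuclideanSpace ℝ (Fin m) → ℝ)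
    (μ : ℝ) (hμ : 0 < μ)
    (ystar : EuclideanSpace ℝ (Fin m)) (hys : ystar ∈ Y)
    (hconc : ∀ x ∈ X, StrongConcaveOn Y μ (f x))
    (ybr : EuclideanSpace ℝ (Fin d) → EuclideanSpace ℝ (Fin m))
    (hbr : ∀ x ∈ X, ybr x ∈ Y ∧ ∀ y ∈ Y, f x y ≤ f x (ybr x))
    (gx : EuclideanSpace ℝ (Fin d) → EuclideanSpace ℝ (Fin m) → EuclideanSpace ℝ (Fin d))
    (hconvx : ∀ x ∈ X, ∀ x' ∈ X, f x ystar + ⟪gx x ystar, x' - x⟫ ≤ f x' ystar)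
    (xstar : EuclideanSpace ℝ (Fin d)) (hxs : xstar ∈ X) (hystar : ybr xstar = ystar)
    (F : EuclideanSpace ℝ (Fin d) → ℝ) (hFdef : ∀ x, F x = f x (ybr x))
    (xprev : EuclideanSpace ℝ (Fin d)) (hxp : xprev ∈ X) :
    μ * (1 / 2 * ‖ybr xprev - ystar‖ ^ 2) ≤ f xprev (ybr xprev) - f xprev ystar
    ∧ f xprev (ybr xprev) - f xprev ystar
      ≤ F xprev - F xstar - ⟪gx xstar ystar, xprev - xstar⟫ := by
  obtain ⟨hyb, hmax⟩ := hbr xprev hxp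
  constructor
  · -- strong concavity at the maximizer
    set yb := ybr xprev
    set c : ℝ := μ / 2 * ‖ystar - yb‖ ^ 2 with hc
    have key : ∀ a ∈ Set.Ioo (0:ℝ) 1, (1 - a) * c ≤ f xprev yb - f xprev ystar := by
      intro a ⟨ha0, ha1⟩
      have hb0 : (0:ℝ) ≤ 1 - a := by linarith
      have h1 := (hconc xprev hxp).2 hys hyb ha0.le hb0 (by ring)
      have h2 : f xprev (a • ystar + (1 - a) • yb) ≤ f xprev yb :=
        hmax _ (hYc hys hyb ha0.le hb0 (by ring))
      have := h1.trans h2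
      simp only [smul_eq_mul] at this
      have h3 : a * ((1 - a) * c) ≤ a * (f xprev yb - f xprev ystar) := by rw [hc]; nlinarith
      exact le_of_mul_le_mul_left h3 ha0
    have hlim : Filter.Tendsto (fun a : ℝ => (1 - a) * c) (nhdsWithin 0 (Set.Ioo 0 1))
        (nhds ((1 - 0) * c)) :=
      ((continuous_const.sub continuous_id).mul continuous_const).continuousWithinAt
    have hne : (nhdsWithin (0:ℝ) (Set.Ioo 0 1)).NeBot :=
      left_nhdsWithin_Ioo_neBot (by norm_num)
    have hle : (1 - 0) * c ≤ f xprev yb - f xprev ystar :=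
      le_of_tendsto hlim (Filter.eventually_mem_set.mpr self_mem_nhdsWithin |>.mono key)
    have hnorm : ‖ystar - yb‖ = ‖yb - ystar‖ := norm_sub_rev _ _
    rw [hc, hnorm] at hle
    nlinarith [hle]
  · have h := hconvx xstar hxs xprev hxp
    rw [hFdef xprev, hFdef xstar, hystar]
    linarith
end
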